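/- arXiv:1007.5032 — 2 statements merged into one kernel-verified Lean document; each statement's English description precedes it below -/
import Mathlib

section
/- Suppose the edge-weighted conflict graph has inductive independence number at most ρ ≥ 1 with respect to the ordering π, and let x be a fractional LP solution of the weighted LP with value b*. Then there exists a partly feasible allocation S with b(S) ≥ b*/(16·√k·ρ). (This is the existence form of the guarantee of the randomized LP-rounding algorithm for weighted conflict graphs, which outputs such an allocation in expectation.) -/
open Finset

/-- Symmetrized edge weights. -/
def wbar {n : ℕ} (w : Fin n → Fin n → ℝ) (u v : Fin n) : ℝ := w u v + w v u

/-- `M` is an independent set of the edge-weighted conflict graph `w`. -/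
def WIndep {n : ℕ} (w : Fin n → Fin n → ℝ) (M : Finset (Fin n)) : Prop :=
  ∀ v ∈ M, ∑ u ∈ M, w u v < 1

/-- The edge-weighted conflict graph `w` has inductive independence number at
most `ρ` with respect to the ordering `π`. -/
def WIndIndepAtMost {n : ℕ} (w : Fin n → Fin n → ℝ) (π : Equiv.Perm (Fin n))
    (ρ : ℝ) : Prop :=
  ∀ (v : Fin n) (M : Finset (Fin n)), (∀ u ∈ M, π u < π v) → WIndep w M →
    ∑ u ∈ M, wbar w u v ≤ ρ

/-- `x` is a fractional solution of the weighted LP. -/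
def WIsLPSol {n k : ℕ} (w : Fin n → Fin n → ℝ) (π : Equiv.Perm (Fin n)) (ρ : ℝ)
    (x : Fin n → Finset (Fin k) → ℝ) : Prop :=
  (∀ v T, 0 ≤ x v T) ∧
  (∀ (v : Fin n) (j : Fin k),
      ∑ u ∈ univ.filter (fun u => π u < π v),
        ∑ T ∈ univ.filter (fun T : Finset (Fin k) => j ∈ T),
          wbar w u v * x u T ≤ ρ) ∧
  (∀ v : Fin n, ∑ T : Finset (Fin k), x v T ≤ 1)

/-- `S` is a feasible allocation: for each channel `j`, the set of vertices
assigned channel `j` is an independent set of the weighted conflict graph. -/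
def WFeasibleAlloc {n k : ℕ} (w : Fin n → Fin n → ℝ)
    (S : Fin n → Finset (Fin k)) : Prop :=
  ∀ j : Fin k, WIndep w (univ.filter fun v => j ∈ S v)

/-- `S` is a partly feasible allocation. -/
def PartlyFeasible {n k : ℕ} (w : Fin n → Fin n → ℝ) (π : Equiv.Perm (Fin n))
    (S : Fin n → Finset (Fin k)) : Prop :=
  ∀ v : Fin n,
    ∑ u ∈ univ.filter (fun u => π u < π v ∧ (S u ∩ S v).Nonempty), wbar w u v
      < 1 / 2


/-!
Split the bundles into small ones (at most `√k` channels) and large ones; one of the two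
classes carries at least half of the LP value. For either class `D`, the LP mass of bundles of
`D` that earlier vertices hold and that meet a bundle `T ∈ D` is, weighted by `wbar`, at most
`√k ρ`: a small `T` meets it in at most `√k` channels, each charged at most `ρ` by the LP, and a
large bundle has more than `√k` channels, so double counting over all `k` channels gives
`k ρ / √k`.

Let every vertex independently draw `T ∈ D` with probability `x v T / (4 √k ρ)` (and `∅`
otherwise), then empty every bundle whose conflict load from earlier vertices reaches `1 / 2`.
The result is partly feasible, and since `[load < 1/2] ≥ 1 - 2 · load`, in expectation at most
half of the drawn value is lost, leaving `∑_{T ∈ D} b x / (8 √k ρ)`; some outcome is at least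
as good as the expectation.
-/

section ProductWeights

variable {ι α : Type*} [Fintype ι] [DecidableEq ι] [Fintype α] {p : ι → α → ℝ}

theorem sum_prod_mul_prod_apply (hp : ∀ i, ∑ a, p i a = 1) (s : Finset ι) (g : ι → α → ℝ) :
    ∑ ω : ι → α, (∏ i, p i (ω i)) * ∏ i ∈ s, g i (ω i) = ∏ i ∈ s, ∑ a, p i a * g i a := by
  have hfactor : ∀ ω : ι → α, (∏ i, p i (ω i)) * ∏ i ∈ s, g i (ω i)
      = ∏ i, p i (ω i) * (if i ∈ s then g i (ω i) else 1) := fun ω => by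
    rw [prod_mul_distrib, Fintype.prod_ite_mem]
  rw [sum_congr rfl fun ω _ => hfactor ω,
    ← Fintype.prod_sum fun i a => p i a * if i ∈ s then g i a else 1, ← Fintype.prod_ite_mem s]
  refine Fintype.prod_congr _ _ fun i => ?_
  split_ifs <;> simp [hp]

theorem sum_prod_eq_one (hp : ∀ i, ∑ a, p i a = 1) : ∑ ω : ι → α, ∏ i, p i (ω i) = 1 := by
  simpa using sum_prod_mul_prod_apply hp ∅ fun _ _ => (1 : ℝ)

theorem sum_prod_mul_apply (hp : ∀ i, ∑ a, p i a = 1) (v : ι) (g : α → ℝ) :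
    ∑ ω : ι → α, (∏ i, p i (ω i)) * g (ω v) = ∑ a, p v a * g a := by
  simpa using sum_prod_mul_prod_apply hp {v} fun _ => g

theorem sum_prod_mul_apply_apply [DecidableEq α] (hp : ∀ i, ∑ a, p i a = 1) {u v : ι}
    (huv : u ≠ v) (f : α → α → ℝ) :
    ∑ ω : ι → α, (∏ i, p i (ω i)) * f (ω u) (ω v) = ∑ a, ∑ c, p u a * p v c * f a c := by
  have hpoint : ∀ a c, ∑ ω : ι → α, (∏ i, p i (ω i)) *
      ((if ω u = a then 1 else 0) * if ω v = c then 1 else 0) = p u a * p v c := fun a c => by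
    simpa [prod_pair huv, huv.symm] using sum_prod_mul_prod_apply hp {u, v}
      fun i x => if i = u then (if x = a then 1 else 0) else if x = c then 1 else 0
  have hexpand : ∀ ω : ι → α, f (ω u) (ω v)
      = ∑ a, ∑ c, f a c * ((if ω u = a then 1 else 0) * if ω v = c then 1 else 0) := fun ω => by
    simp [mul_ite]
  simp_rw [hexpand, mul_sum]
  rw [sum_comm]
  refine sum_congr rfl fun a _ => ?_
  rw [sum_comm]
  refine sum_congr rfl fun c _ => ?_
  rw [← hpoint, sum_mul]
  exact sum_congr rfl fun ω _ => by ring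

theorem exists_le_sum_prod_mul [Nonempty α] (hp0 : ∀ i a, 0 ≤ p i a)
    (hp : ∀ i, ∑ a, p i a = 1) (F : (ι → α) → ℝ) :
    ∃ ω, ∑ ω' : ι → α, (∏ i, p i (ω' i)) * F ω' ≤ F ω := by
  obtain ⟨ω, hω⟩ := Finite.exists_max F
  refine ⟨ω, ?_⟩
  calc ∑ ω' : ι → α, (∏ i, p i (ω' i)) * F ω' ≤ ∑ ω' : ι → α, (∏ i, p i (ω' i)) * F ω :=
        sum_le_sum fun ω' _ => mul_le_mul_of_nonneg_left (hω ω') (prod_nonneg fun i _ => hp0 i _)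
    _ = F ω := by rw [← sum_mul, sum_prod_eq_one hp, one_mul]

end ProductWeights

section ConflictLoad

variable {n k : ℕ} (w : Fin n → Fin n → ℝ) (π : Equiv.Perm (Fin n))

def conflictLoad (S : Fin n → Finset (Fin k)) (v : Fin n) : ℝ :=
  ∑ u ∈ univ.filter (fun u => π u < π v ∧ (S u ∩ S v).Nonempty), wbar w u v

noncomputable def dropOverloaded (S : Fin n → Finset (Fin k)) (v : Fin n) : Finset (Fin k) :=
  if conflictLoad w π S v < 1 / 2 then S v else ∅

def overlapLoad (q : Fin n → Finset (Fin k) → ℝ) (D : Finset (Finset (Fin k))) (v : Fin n)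
    (T : Finset (Fin k)) : ℝ :=
  ∑ u ∈ univ.filter (π · < π v), wbar w u v * ∑ T' ∈ D.filter (fun T' => (T' ∩ T).Nonempty), q u T'

variable {w π}

theorem wbar_nonneg (hw : ∀ u v, 0 ≤ w u v) (u v : Fin n) : 0 ≤ wbar w u v :=
  add_nonneg (hw u v) (hw v u)

theorem conflictLoad_eq_sum (S : Fin n → Finset (Fin k)) (v : Fin n) :
    conflictLoad w π S v =
      ∑ u ∈ univ.filter (π · < π v), if (S u ∩ S v).Nonempty then wbar w u v else 0 := by
  rw [conflictLoad, ← filter_filter, sum_filter]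

theorem conflictLoad_nonneg (hw : ∀ u v, 0 ≤ w u v) (S : Fin n → Finset (Fin k)) (v : Fin n) :
    0 ≤ conflictLoad w π S v :=
  sum_nonneg fun u _ => wbar_nonneg hw u v

theorem conflictLoad_mono (hw : ∀ u v, 0 ≤ w u v) {S S' : Fin n → Finset (Fin k)}
    (h : ∀ v, S v ⊆ S' v) (v : Fin n) : conflictLoad w π S v ≤ conflictLoad w π S' v := by
  refine sum_le_sum_of_subset_of_nonneg (fun u hu => ?_) fun u _ _ => wbar_nonneg hw u v
  simp only [mem_filter, mem_univ, true_and] at hu ⊢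
  exact ⟨hu.1, hu.2.mono (inter_subset_inter (h u) (h v))⟩

theorem conflictLoad_of_eq_empty {S : Fin n → Finset (Fin k)} {v : Fin n} (hv : S v = ∅) :
    conflictLoad w π S v = 0 := by
  simp [conflictLoad, hv]

theorem dropOverloaded_subset (S : Fin n → Finset (Fin k)) (v : Fin n) :
    dropOverloaded w π S v ⊆ S v := by
  unfold dropOverloaded
  split_ifs <;> simp

theorem partlyFeasible_dropOverloaded (hw : ∀ u v, 0 ≤ w u v) (S : Fin n → Finset (Fin k)) :
    PartlyFeasible w π (dropOverloaded w π S) := by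
  intro v
  change conflictLoad w π (dropOverloaded w π S) v < 1 / 2
  by_cases hv : conflictLoad w π S v < 1 / 2
  · exact (conflictLoad_mono hw (dropOverloaded_subset S) v).trans_lt hv
  · rw [conflictLoad_of_eq_empty (if_neg hv)]
    norm_num

theorem mul_one_sub_two_mul_conflictLoad_le (hw : ∀ u v, 0 ≤ w u v)
    {b : Fin n → Finset (Fin k) → ℝ} (hb : ∀ v T, 0 ≤ b v T) (S : Fin n → Finset (Fin k))
    (v : Fin n) :
    b v (S v) * (1 - 2 * conflictLoad w π S v) ≤ b v (dropOverloaded w π S v) := by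
  have hload := conflictLoad_nonneg (π := π) hw S v
  unfold dropOverloaded
  split_ifs with hv
  · nlinarith [hb v (S v)]
  · nlinarith [hb v (S v), hb v ∅]

theorem sum_prod_mul_mul_conflictLoad {p : Fin n → Finset (Fin k) → ℝ}
    (hp : ∀ v, ∑ T, p v T = 1) (g : Finset (Fin k) → ℝ) (v : Fin n) :
    ∑ ω : Fin n → Finset (Fin k), (∏ i, p i (ω i)) * (g (ω v) * conflictLoad w π ω v)
      = ∑ T, p v T * g T * overlapLoad w π p univ v T := by
  have hpair : ∀ u ∈ univ.filter (π · < π v),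
      ∑ ω : Fin n → Finset (Fin k), (∏ i, p i (ω i)) *
          (g (ω v) * if (ω u ∩ ω v).Nonempty then wbar w u v else 0)
        = ∑ a, ∑ c, p u a * p v c * (g c * if (a ∩ c).Nonempty then wbar w u v else 0) :=
    fun u hu => sum_prod_mul_apply_apply hp (by rintro rfl; simp at hu)
      fun a c => g c * if (a ∩ c).Nonempty then wbar w u v else 0
  simp_rw [conflictLoad_eq_sum, mul_sum]
  rw [sum_comm, sum_congr rfl hpair]
  simp only [overlapLoad, mul_sum]
  conv_rhs => rw [sum_comm]
  refine sum_congr rfl fun u _ => ?_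
  rw [sum_comm]
  refine sum_congr rfl fun c _ => ?_
  rw [sum_filter]
  refine sum_congr rfl fun a _ => ?_
  split_ifs <;> ring

end ConflictLoad

section Rounding

variable {n k : ℕ} {w : Fin n → Fin n → ℝ} {π : Equiv.Perm (Fin n)}
  {b : Fin n → Finset (Fin k) → ℝ}

-- `overlapLoad w π p univ v T` is the expected conflict load of `v` given that `v` draws `T`.
theorem exists_partlyFeasible_of_product_weights (hw : ∀ u v, 0 ≤ w u v)
    (hb : ∀ v T, 0 ≤ b v T) {p : Fin n → Finset (Fin k) → ℝ} (hp0 : ∀ v T, 0 ≤ p v T)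
    (hp : ∀ v, ∑ T, p v T = 1) :
    ∃ S : Fin n → Finset (Fin k), PartlyFeasible w π S ∧
      ∑ v, ∑ T, p v T * b v T * (1 - 2 * overlapLoad w π p univ v T) ≤ ∑ v, b v (S v) := by
  obtain ⟨ω, hω⟩ := exists_le_sum_prod_mul hp0 hp fun ω => ∑ v, b v (dropOverloaded w π ω v)
  refine ⟨_, partlyFeasible_dropOverloaded hw ω, le_trans ?_ hω⟩
  have hexpect : ∀ v, ∑ T, p v T * b v T * (1 - 2 * overlapLoad w π p univ v T)
      = ∑ ω' : Fin n → Finset (Fin k),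
          (∏ i, p i (ω' i)) * (b v (ω' v) * (1 - 2 * conflictLoad w π ω' v)) := fun v => by
    have hsplit : ∀ ω' : Fin n → Finset (Fin k),
        (∏ i, p i (ω' i)) * (b v (ω' v) * (1 - 2 * conflictLoad w π ω' v))
          = (∏ i, p i (ω' i)) * b v (ω' v)
            - 2 * ((∏ i, p i (ω' i)) * (b v (ω' v) * conflictLoad w π ω' v)) := fun ω' => by
      ring
    rw [sum_congr rfl fun ω' _ => hsplit ω', sum_sub_distrib, ← mul_sum,
      sum_prod_mul_apply hp, sum_prod_mul_mul_conflictLoad hp, mul_sum, ← sum_sub_distrib]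
    exact sum_congr rfl fun T _ => by ring
  calc ∑ v, ∑ T, p v T * b v T * (1 - 2 * overlapLoad w π p univ v T)
      = ∑ ω' : Fin n → Finset (Fin k),
          (∏ i, p i (ω' i)) * ∑ v, b v (ω' v) * (1 - 2 * conflictLoad w π ω' v) := by
        simp only [hexpect, mul_sum]
        exact sum_comm
    _ ≤ ∑ ω' : Fin n → Finset (Fin k), (∏ i, p i (ω' i)) * ∑ v, b v (dropOverloaded w π ω' v) :=
        sum_le_sum fun ω' _ => mul_le_mul_of_nonneg_left
          (sum_le_sum fun v _ => mul_one_sub_two_mul_conflictLoad_le hw hb ω' v)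
          (prod_nonneg fun i _ => hp0 i _)

/-- Vertex `v` draws `T ∈ D` with probability `x v T / γ` and the empty bundle with the
remaining probability. -/
noncomputable def scaledLottery (D : Finset (Finset (Fin k))) (γ : ℝ)
    (x : Fin n → Finset (Fin k) → ℝ) (v : Fin n) (T : Finset (Fin k)) : ℝ :=
  (if T ∈ D then x v T / γ else 0) + if T = ∅ then 1 - (∑ T' ∈ D, x v T') / γ else 0

variable {x : Fin n → Finset (Fin k) → ℝ} {D : Finset (Finset (Fin k))} {γ : ℝ}

theorem sum_scaledLottery_mul (f : Finset (Fin k) → ℝ) (v : Fin n) :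
    ∑ T, scaledLottery D γ x v T * f T
      = (∑ T ∈ D, x v T * f T) / γ + (1 - (∑ T ∈ D, x v T) / γ) * f ∅ := by
  simp only [scaledLottery, add_mul, sum_add_distrib, ite_mul, zero_mul, sum_ite_eq',
    mem_univ, if_true, Fintype.sum_ite_mem, sum_div]
  exact congrArg₂ _ (sum_congr rfl fun T _ => by ring) rfl

theorem sum_scaledLottery (v : Fin n) : ∑ T, scaledLottery D γ x v T = 1 := by
  simpa using sum_scaledLottery_mul (D := D) (γ := γ) (x := x) (fun _ => 1) v

theorem scaledLottery_nonneg (hx0 : ∀ v T, 0 ≤ x v T) (hγ : 0 < γ)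
    (hxγ : ∀ v, ∑ T ∈ D, x v T ≤ γ) (v : Fin n) (T : Finset (Fin k)) :
    0 ≤ scaledLottery D γ x v T := by
  have hmass : (∑ T ∈ D, x v T) / γ ≤ 1 := (div_le_one hγ).2 (hxγ v)
  unfold scaledLottery
  split_ifs <;> linarith [div_nonneg (hx0 v T) hγ.le]

theorem overlapLoad_scaledLottery (v : Fin n) (T : Finset (Fin k)) :
    overlapLoad w π (scaledLottery D γ x) univ v T = overlapLoad w π x D v T / γ := by
  rw [overlapLoad, overlapLoad, sum_div]
  refine sum_congr rfl fun u _ => ?_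
  rw [mul_div_assoc]
  congr 1
  simpa [sum_filter, mul_ite] using
    sum_scaledLottery_mul (D := D) (γ := γ) (x := x)
      (fun T' => if (T' ∩ T).Nonempty then 1 else 0) u

theorem exists_partlyFeasible_of_overlapLoad_le (hw : ∀ u v, 0 ≤ w u v)
    (hb : ∀ v T, 0 ≤ b v T) (hx0 : ∀ v T, 0 ≤ x v T) (hx1 : ∀ v, ∑ T, x v T ≤ 1) {L : ℝ}
    (hL : 1 / 4 ≤ L) (hload : ∀ v, ∀ T ∈ D, overlapLoad w π x D v T ≤ L) :
    ∃ S : Fin n → Finset (Fin k), PartlyFeasible w π S ∧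
      (∑ v, ∑ T ∈ D, b v T * x v T) / (8 * L) ≤ ∑ v, b v (S v) := by
  have hγ : 0 < 4 * L := by linarith
  have hxγ : ∀ v, ∑ T ∈ D, x v T ≤ 4 * L := fun v =>
    ((sum_le_univ_sum_of_nonneg (hx0 v)).trans (hx1 v)).trans (by linarith)
  obtain ⟨S, hS, hval⟩ := exists_partlyFeasible_of_product_weights (π := π) hw hb
    (scaledLottery_nonneg hx0 hγ hxγ) sum_scaledLottery
  refine ⟨S, hS, le_trans ?_ hval⟩
  rw [sum_div]
  refine sum_le_sum fun v _ => ?_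
  simp only [mul_assoc (scaledLottery D _ x v _), overlapLoad_scaledLottery]
  have hempty : overlapLoad w π x D v ∅ = 0 := by simp [overlapLoad]
  have hrest : 0 ≤ (1 - (∑ T ∈ D, x v T) / (4 * L)) * (b v ∅ * (1 - 2 * (0 / (4 * L)))) :=
    mul_nonneg (by rw [sub_nonneg, div_le_one hγ]; exact hxγ v) (by simpa using hb v ∅)
  have hhalf : 1 - 2 * (L / (4 * L)) = 1 / 2 := by field_simp; ring
  rw [sum_scaledLottery_mul, hempty]
  refine le_add_of_le_of_nonneg ?_ hrest
  calc (∑ T ∈ D, b v T * x v T) / (8 * L)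
      = (∑ T ∈ D, x v T * (b v T * (1 - 2 * (L / (4 * L))))) / (4 * L) := by
        rw [hhalf, div_eq_div_iff (by linarith) hγ.ne', sum_mul, sum_mul]
        exact sum_congr rfl fun T _ => by ring
    _ ≤ (∑ T ∈ D, x v T * (b v T * (1 - 2 * (overlapLoad w π x D v T / (4 * L))))) / (4 * L) := by
        gcongr with T hT
        · exact hx0 v T
        · exact hb v T
        · exact hload v T hT

end Rounding

section DoubleCounting

variable {α : Type*} [Fintype α] [DecidableEq α]

theorem sum_sum_filter_mem_eq_sum_card_inter_mul (T : Finset α) (c : Finset α → ℝ) :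
    ∑ j ∈ T, ∑ T' ∈ univ.filter (fun T' => j ∈ T'), c T' = ∑ T', #(T ∩ T') * c T' := by
  simp_rw [sum_filter]
  rw [sum_comm]
  refine sum_congr rfl fun T' _ => ?_
  rw [sum_ite_mem, sum_const, nsmul_eq_mul]

theorem sum_filter_inter_nonempty_le {c : Finset α → ℝ} (hc : ∀ T', 0 ≤ c T')
    (D : Finset (Finset α)) (T : Finset α) :
    ∑ T' ∈ D.filter (fun T' => (T' ∩ T).Nonempty), c T'
      ≤ ∑ j ∈ T, ∑ T' ∈ univ.filter (fun T' => j ∈ T'), c T' := by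
  rw [sum_sum_filter_mem_eq_sum_card_inter_mul]
  calc ∑ T' ∈ D.filter (fun T' => (T' ∩ T).Nonempty), c T'
      ≤ ∑ T' ∈ D.filter (fun T' => (T' ∩ T).Nonempty), #(T ∩ T') * c T' := by
        refine sum_le_sum fun T' hT' => le_mul_of_one_le_left (hc T') ?_
        rw [inter_comm]
        exact_mod_cast card_pos.2 (mem_filter.1 hT').2
    _ ≤ ∑ T', #(T ∩ T') * c T' :=
        sum_le_univ_sum_of_nonneg fun T' => mul_nonneg (Nat.cast_nonneg _) (hc T')

theorem mul_sum_le_sum_sum_filter_mem {c : Finset α → ℝ} (hc : ∀ T', 0 ≤ c T')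
    {D : Finset (Finset α)} {s : ℝ} (hD : ∀ T' ∈ D, s ≤ #T') :
    s * ∑ T' ∈ D, c T' ≤ ∑ j, ∑ T' ∈ univ.filter (fun T' => j ∈ T'), c T' := by
  rw [sum_sum_filter_mem_eq_sum_card_inter_mul, mul_sum]
  refine (sum_le_sum fun T' hT' => mul_le_mul_of_nonneg_right (hD T' hT') (hc T')).trans ?_
  simp only [univ_inter]
  exact sum_le_univ_sum_of_nonneg fun T' => mul_nonneg (Nat.cast_nonneg _) (hc T')

end DoubleCounting

theorem exists_eq_or_eq_compl_sum_le_two_mul_sum {ι β : Type*} [Fintype ι] [Fintype β]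
    [DecidableEq β] (s : Finset β) (f : ι → β → ℝ) : ∃ D, (D = s ∨ D = sᶜ) ∧
      ∑ v, ∑ T, f v T ≤ 2 * ∑ v, ∑ T ∈ D, f v T := by
  have hsplit : ∑ v, ∑ T, f v T = ∑ v, ∑ T ∈ s, f v T + ∑ v, ∑ T ∈ sᶜ, f v T := by
    simp only [← sum_add_distrib, sum_add_sum_compl]
  rcases le_total (∑ v, ∑ T ∈ s, f v T) (∑ v, ∑ T ∈ sᶜ, f v T) with h | h
  · exact ⟨sᶜ, .inr rfl, by linarith⟩
  · exact ⟨s, .inl rfl, by linarith⟩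

namespace WIsLPSol

variable {n k : ℕ} {w : Fin n → Fin n → ℝ} {π : Equiv.Perm (Fin n)} {ρ : ℝ}
  {x : Fin n → Finset (Fin k) → ℝ}

theorem sum_wbar_mul_sum_le (hx : WIsLPSol w π ρ x) (v : Fin n) (J : Finset (Fin k)) :
    ∑ u ∈ univ.filter (fun u => π u < π v),
        wbar w u v * ∑ j ∈ J, ∑ T ∈ univ.filter (fun T => j ∈ T), x u T ≤ #J * ρ := by
  simp_rw [mul_sum]
  rw [sum_comm]
  simpa using sum_le_card_nsmul J _ ρ fun j _ => hx.2.1 v j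

theorem overlapLoad_le_card_mul (hw : ∀ u v, 0 ≤ w u v) (hx : WIsLPSol w π ρ x)
    (D : Finset (Finset (Fin k))) (v : Fin n) (T : Finset (Fin k)) :
    overlapLoad w π x D v T ≤ #T * ρ :=
  (sum_le_sum fun u _ => mul_le_mul_of_nonneg_left
    (sum_filter_inter_nonempty_le (hx.1 u) D T) (wbar_nonneg hw u v)).trans
    (hx.sum_wbar_mul_sum_le v T)

theorem overlapLoad_le_of_le_card (hw : ∀ u v, 0 ≤ w u v) (hx : WIsLPSol w π ρ x)
    {D : Finset (Finset (Fin k))} {s : ℝ} (hs : 0 < s) (hD : ∀ T' ∈ D, s ≤ #T') (v : Fin n)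
    (T : Finset (Fin k)) : overlapLoad w π x D v T ≤ k * ρ / s := by
  rw [le_div_iff₀ hs]
  calc overlapLoad w π x D v T * s
      = ∑ u ∈ univ.filter (fun u => π u < π v),
          wbar w u v * (s * ∑ T' ∈ D.filter (fun T' => (T' ∩ T).Nonempty), x u T') := by
        rw [overlapLoad, sum_mul]
        exact sum_congr rfl fun u _ => by ring
    _ ≤ ∑ u ∈ univ.filter (fun u => π u < π v),
          wbar w u v * ∑ j, ∑ T' ∈ univ.filter (fun T' => j ∈ T'), x u T' :=
        sum_le_sum fun u _ => mul_le_mul_of_nonneg_left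
          (mul_sum_le_sum_sum_filter_mem (hx.1 u) fun T' hT' => hD T' (mem_filter.1 hT').1)
          (wbar_nonneg hw u v)
    _ ≤ #(univ : Finset (Fin k)) * ρ := hx.sum_wbar_mul_sum_le v univ
    _ = k * ρ := by simp

end WIsLPSol

theorem exists_partly_feasible_alloc_of_weighted_lp_solution_general {n k : ℕ}
    (hk : 1 ≤ k)
    (w : Fin n → Fin n → ℝ) (hw : ∀ u v, 0 ≤ w u v)
    (π : Equiv.Perm (Fin n)) (ρ : ℝ) (hρ : 1 ≤ ρ)
    (b : Fin n → Finset (Fin k) → ℝ) (hb : ∀ v T, 0 ≤ b v T)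
    (x : Fin n → Finset (Fin k) → ℝ) (hx : WIsLPSol w π ρ x) :
    ∃ S : Fin n → Finset (Fin k), PartlyFeasible w π S ∧
      (∑ v : Fin n, ∑ T : Finset (Fin k), b v T * x v T)
          / (16 * Real.sqrt k * ρ)
        ≤ ∑ v : Fin n, b v (S v) := by
  have hsk : 1 ≤ Real.sqrt k := Real.one_le_sqrt.2 (by exact_mod_cast hk)
  set small := univ.filter fun T : Finset (Fin k) => (#T : ℝ) ≤ Real.sqrt k
  obtain ⟨D, hsmall_or_large, hhalf⟩ :=
    exists_eq_or_eq_compl_sum_le_two_mul_sum small fun v T => b v T * x v T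
  have hD : ∀ v, ∀ T ∈ D, overlapLoad w π x D v T ≤ Real.sqrt k * ρ := by
    rcases hsmall_or_large with rfl | rfl
    · exact fun v T hT => (hx.overlapLoad_le_card_mul hw _ v T).trans
        (mul_le_mul_of_nonneg_right (mem_filter.1 hT).2 (by linarith))
    · intro v T _
      have hlarge : ∀ T' ∈ smallᶜ, Real.sqrt k ≤ #T' := fun T' hT' =>
        (not_le.1 (by simpa [small] using hT')).le
      calc overlapLoad w π x smallᶜ v T ≤ k * ρ / Real.sqrt k :=
            hx.overlapLoad_le_of_le_card hw (by linarith) hlarge v T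
        _ = Real.sqrt k * ρ := by rw [mul_div_right_comm, Real.div_sqrt]
  obtain ⟨S, hS, hval⟩ := exists_partlyFeasible_of_overlapLoad_le hw hb hx.1 hx.2.2
    (by nlinarith) hD
  refine ⟨S, hS, le_trans ?_ hval⟩
  rw [show 16 * Real.sqrt k * ρ = 2 * (8 * (Real.sqrt k * ρ)) by ring, ← div_div]
  exact div_le_div_of_nonneg_right (by linarith) (by positivity)

/-- rounding guarantee for weighted conflict graphs: there is a
partly feasible allocation of value at least `b* / (16 √k ρ)`. -/
theorem exists_partly_feasible_alloc_of_weighted_lp_solution {n k : ℕ}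
    (hk : 1 ≤ k)
    (w : Fin n → Fin n → ℝ) (hw : ∀ u v, 0 ≤ w u v) (hw0 : ∀ v, w v v = 0)
    (π : Equiv.Perm (Fin n)) (ρ : ℝ) (hρ : 1 ≤ ρ)
    (hind : WIndIndepAtMost w π ρ)
    (b : Fin n → Finset (Fin k) → ℝ) (hb : ∀ v T, 0 ≤ b v T)
    (hb0 : ∀ v, b v ∅ = 0)
    (x : Fin n → Finset (Fin k) → ℝ) (hx : WIsLPSol w π ρ x) :
    ∃ S : Fin n → Finset (Fin k), PartlyFeasible w π S ∧
      (∑ v : Fin n, ∑ T : Finset (Fin k), b v T * x v T)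
          / (16 * Real.sqrt k * ρ)
        ≤ ∑ v : Fin n, b v (S v) :=
  exists_partly_feasible_alloc_of_weighted_lp_solution_general hk w hw π ρ hρ b hb x hx
end

section
/- Let S be a partly feasible allocation on a vertex set V with |V| = n ≥ 2, and let valuations b : V × 2^[k] → ℝ≥0 with b(v,∅)=0 be given. Then there exist allocations S_1, ..., S_m with m ≤ ⌈log₂ n⌉ such that: (a) for every i and every v ∈ V, ∑_{u ≠ v, S_i(u) ∩ S_i(v) ≠ ∅} w̄(u,v) < 1 (in particular each S_i is a feasible allocation); (b) for every v, S_i(v) ∈ {S(v), ∅} for all i, and if S(v) ≠ ∅ then there is exactly one i with S_i(v) = S(v). Consequently, max_i b(S_i) ≥ b(S)/⌈log₂ n⌉, i.e., there exists a feasible allocation of value at least b(S)/⌈log₂ n⌉. -/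
open Finset

/-! Process the vertices in decreasing `π`-order and accept a vertex into the current class when
the conflict weight it receives from the accepted vertices above it is below `1/2`. Partial
feasibility bounds the weight from the vertices below it by `1/2` as well, so every class has
internal conflict weight below `1`. Double counting the weight between rejected and accepted
vertices shows that fewer vertices are rejected than accepted, so the remaining set more than
halves each round and `⌈log₂ n⌉` classes cover `V`. The classes split the value of `S`, so one of
them carries at least the average. -/

section Greedy

variable {α β : Type*} [DecidableEq α]

/-- `C` is the outcome of the greedy pass over `R` in decreasing `key`-order that accepts `v`
exactly when `P` holds of `v` and the vertices accepted before it. -/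
theorem exists_greedy_subset [LinearOrder β] (key : α → β) (P : α → Finset α → Prop)
    (R : Finset α) : ∃ C ⊆ R, ∀ v ∈ R, v ∈ C ↔ P v {u ∈ C | key v < key u} := by
  induction R using Finset.induction_on_min_value key with
  | empty => exact ⟨∅, subset_rfl, by simp⟩
  | insert a R haR hmin ih =>
    obtain ⟨C, hCR, hC⟩ := ih
    have haC : a ∉ C := fun h => haR (hCR h)
    have h_above :
        ∀ v ∈ insert a R, {u ∈ insert a C | key v < key u} = {u ∈ C | key v < key u} := by
      intro v hv
      rw [filter_insert, if_neg]
      rcases mem_insert.mp hv with rfl | hv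
      · exact lt_irrefl _
      · exact (hmin v hv).not_gt
    by_cases ha : P a {u ∈ C | key a < key u}
    · refine ⟨insert a C, insert_subset_insert a hCR, fun v hv => ?_⟩
      rw [h_above v hv]
      rcases mem_insert.mp hv with rfl | hvR
      · simpa using ha
      · rw [← hC v hvR, mem_insert, or_iff_right (ne_of_mem_of_not_mem hvR haR)]
    · refine ⟨C, hCR.trans (subset_insert a R), fun v hv => ?_⟩
      rcases mem_insert.mp hv with rfl | hvR
      · simpa [haC] using ha
      · exact hC v hvR

/-- The hypothesis on `#R` is the sharp one: it is preserved when `#R` drops to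
`#(R \ C) ≤ (#R - 1) / 2` and `m` to `m - 1`. -/
theorem exists_coloring_of_halving (Good : Finset α → Prop) (h_empty : Good ∅)
    (h_halve : ∀ R : Finset α, R.Nonempty → ∃ C ⊆ R, Good C ∧ 2 * #(R \ C) < #R)
    (m : ℕ) (R : Finset α) (hR : #R + 1 < 2 ^ (m + 1)) :
    ∃ c : α → ℕ, (∀ v ∈ R, c v < m) ∧ ∀ i < m, Good {v ∈ R | c v = i} := by
  induction m generalizing R with
  | zero =>
    have : R = ∅ := card_eq_zero.mp (by omega)
    exact ⟨0, by simp [this], by simp⟩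
  | succ m ih =>
    rcases R.eq_empty_or_nonempty with rfl | hne
    · exact ⟨0, by simp, fun _ _ => by simpa using h_empty⟩
    obtain ⟨C, hCR, hC, hcard⟩ := h_halve R hne
    obtain ⟨c, hc_lt, hc_good⟩ := ih (R \ C) (by rw [pow_succ] at hR ⊢; omega)
    refine ⟨fun v => if v ∈ C then 0 else c v + 1, fun v hv => ?_, fun i hi => ?_⟩
    · dsimp only
      split_ifs with hvC
      · omega
      · have := hc_lt v (mem_sdiff.mpr ⟨hv, hvC⟩); omega
    · rcases i with _ | i
      · convert hC using 1
        ext v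
        by_cases hvC : v ∈ C
        · simp [hvC, hCR hvC]
        · simp [hvC]
      · convert hc_good i (by omega) using 1
        ext v
        by_cases hvC : v ∈ C <;> simp [hvC]

end Greedy

section Conflict

variable {n k : ℕ} (w : Fin n → Fin n → ℝ) (S : Fin n → Finset (Fin k))

noncomputable def conflictWeight (u v : Fin n) : ℝ :=
  if (S u ∩ S v).Nonempty then wbar w u v else 0

theorem conflictWeight_comm (u v : Fin n) :
    conflictWeight w S u v = conflictWeight w S v u := by
  rw [conflictWeight, conflictWeight, inter_comm, wbar, wbar, add_comm]

variable {w} in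
theorem conflictWeight_nonneg (hw : ∀ u v, 0 ≤ w u v) (u v : Fin n) :
    0 ≤ conflictWeight w S u v := by
  unfold conflictWeight wbar
  split_ifs
  · exact add_nonneg (hw u v) (hw v u)
  · exact le_rfl

theorem sum_filter_conflicting_eq_sum_conflictWeight (D : Finset (Fin n)) (p : Fin n → Prop)
    [DecidablePred p] (v : Fin n) :
    ∑ u ∈ D with p u ∧ (S u ∩ S v).Nonempty, wbar w u v =
      ∑ u ∈ D with p u, conflictWeight w S u v := by
  simp only [sum_filter, ite_and, conflictWeight]

variable {w S} {π : Equiv.Perm (Fin n)}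

theorem PartlyFeasible.sum_conflictWeight_lt (hS : PartlyFeasible w π S) (v : Fin n) :
    ∑ u with π u < π v, conflictWeight w S u v < 1 / 2 := by
  rw [← sum_filter_conflicting_eq_sum_conflictWeight]
  exact hS v

variable (w S) in
def IsLowConflict (C : Finset (Fin n)) : Prop :=
  ∀ v ∈ C, ∑ u ∈ C.erase v, conflictWeight w S u v < 1

theorem PartlyFeasible.isLowConflict_of_sum_above_lt (hw : ∀ u v, 0 ≤ w u v)
    (hS : PartlyFeasible w π S) {C : Finset (Fin n)}
    (hC : ∀ v ∈ C, ∑ u ∈ C with π v < π u, conflictWeight w S u v < 1 / 2) :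
    IsLowConflict w S C := by
  intro v hv
  rw [← sum_filter_add_sum_filter_not _ (fun u => π v < π u)]
  have h_above : (C.erase v).filter (fun u => π v < π u) = C.filter (fun u => π v < π u) := by
    ext u
    simp only [mem_filter, mem_erase, and_congr_left_iff, and_iff_right_iff_imp]
    rintro h - rfl
    exact lt_irrefl _ h
  have h_below : (C.erase v).filter (fun u => ¬ π v < π u) ⊆ univ.filter (π · < π v) := by
    intro u hu
    simp only [mem_filter, mem_erase, not_lt] at hu
    exact mem_filter.mpr ⟨mem_univ u,
      hu.2.lt_of_ne fun h => hu.1.1 (π.injective h)⟩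
  have := sum_le_sum_of_subset_of_nonneg h_below fun u _ _ => conflictWeight_nonneg S hw u v
  rw [h_above]
  linarith [hC v hv, hS.sum_conflictWeight_lt v]

end Conflict

section Halving

variable {n k : ℕ} {w : Fin n → Fin n → ℝ} {S : Fin n → Finset (Fin k)} {π : Equiv.Perm (Fin n)}

/-- Double counting: each vertex of `A` receives weight at least `1/2` from the vertices of `C`
above it, while partial feasibility lets each vertex of `C` send less than `1/2` downwards. -/
theorem PartlyFeasible.card_lt_card (hw : ∀ u v, 0 ≤ w u v) (hS : PartlyFeasible w π S)
    {A C : Finset (Fin n)} (hC : C.Nonempty)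
    (hA : ∀ v ∈ A, 1 / 2 ≤ ∑ u ∈ C with π v < π u, conflictWeight w S u v) : #A < #C := by
  have h_send : ∀ u ∈ C, ∑ v ∈ A with π v < π u, conflictWeight w S u v < 1 / 2 := by
    intro u _
    calc ∑ v ∈ A with π v < π u, conflictWeight w S u v
        ≤ ∑ v with π v < π u, conflictWeight w S u v :=
          sum_le_sum_of_subset_of_nonneg (filter_subset_filter _ (subset_univ A))
            fun v _ _ => conflictWeight_nonneg S hw u v
      _ = ∑ v with π v < π u, conflictWeight w S v u :=
          sum_congr rfl fun v _ => conflictWeight_comm w S u v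
      _ < 1 / 2 := hS.sum_conflictWeight_lt u
  have : (#A : ℝ) * (1 / 2) < #C * (1 / 2) := by
    calc (#A : ℝ) * (1 / 2) = ∑ _v ∈ A, (1 / 2 : ℝ) := by rw [sum_const, nsmul_eq_mul]
      _ ≤ ∑ v ∈ A, ∑ u ∈ C with π v < π u, conflictWeight w S u v := sum_le_sum hA
      _ = ∑ u ∈ C, ∑ v ∈ A with π v < π u, conflictWeight w S u v :=
          sum_comm' fun v u => by simp only [mem_filter]; tauto
      _ < ∑ _u ∈ C, (1 / 2 : ℝ) := sum_lt_sum_of_nonempty hC h_send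
      _ = #C * (1 / 2) := by rw [sum_const, nsmul_eq_mul]
  exact_mod_cast lt_of_mul_lt_mul_right this (by norm_num)

theorem PartlyFeasible.exists_isLowConflict_halving (hw : ∀ u v, 0 ≤ w u v)
    (hS : PartlyFeasible w π S) (R : Finset (Fin n)) (hR : R.Nonempty) :
    ∃ C ⊆ R, IsLowConflict w S C ∧ 2 * #(R \ C) < #R := by
  obtain ⟨C, hCR, hC⟩ := exists_greedy_subset π
    (fun v D => ∑ u ∈ D, conflictWeight w S u v < 1 / 2) R
  have h_accepted : ∀ v ∈ C, ∑ u ∈ C with π v < π u, conflictWeight w S u v < 1 / 2 :=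
    fun v hv => (hC v (hCR hv)).mp hv
  have h_rejected : ∀ v ∈ R \ C, 1 / 2 ≤ ∑ u ∈ C with π v < π u, conflictWeight w S u v := by
    intro v hv
    obtain ⟨hvR, hvC⟩ := mem_sdiff.mp hv
    exact not_lt.mp fun h => hvC ((hC v hvR).mpr h)
  have hC_ne : C.Nonempty := by
    rw [nonempty_iff_ne_empty]
    rintro rfl
    obtain ⟨v, hv⟩ := hR
    have := h_rejected v (by simpa using hv)
    norm_num at this
  refine ⟨C, hCR, hS.isLowConflict_of_sum_above_lt hw h_accepted, ?_⟩
  have := hS.card_lt_card hw hC_ne h_rejected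
  have := card_sdiff_add_card_eq_card hCR
  omega

end Halving

section ClassAlloc

variable {n k : ℕ} {ι : Type*} [DecidableEq ι] (S : Fin n → Finset (Fin k)) (c : Fin n → ι)

def classAlloc (i : ι) (v : Fin n) : Finset (Fin k) :=
  if c v = i then S v else ∅

theorem classAlloc_eq_or_eq_empty (i : ι) (v : Fin n) :
    classAlloc S c i v = S v ∨ classAlloc S c i v = ∅ := by
  unfold classAlloc
  split_ifs
  exacts [Or.inl rfl, Or.inr rfl]

theorem existsUnique_classAlloc_eq {v : Fin n} (hv : S v ≠ ∅) :
    ∃! i, classAlloc S c i v = S v := by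
  refine ⟨c v, if_pos rfl, fun i (hi : classAlloc S c i v = S v) => ?_⟩
  by_contra h
  rw [classAlloc, if_neg (Ne.symm h)] at hi
  exact hv hi.symm

theorem sum_sum_classAlloc [Fintype ι] (b : Fin n → Finset (Fin k) → ℝ)
    (hb0 : ∀ v, b v ∅ = 0) :
    ∑ i, ∑ v, b v (classAlloc S c i v) = ∑ v, b v (S v) := by
  rw [sum_comm]
  refine sum_congr rfl fun v _ => ?_
  simp only [classAlloc, apply_ite (b v), hb0]
  exact Fintype.sum_ite_eq (c v) fun _ => b v (S v)

variable (w : Fin n → Fin n → ℝ)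

theorem conflictWeight_classAlloc (i : ι) (u v : Fin n) :
    conflictWeight w (classAlloc S c i) u v =
      if c u = i ∧ c v = i then conflictWeight w S u v else 0 := by
  unfold conflictWeight classAlloc
  split_ifs <;> simp_all

variable {S c w} in
theorem IsLowConflict.sum_conflictWeight_classAlloc_lt {i : ι}
    (h : IsLowConflict w S {v | c v = i}) (v : Fin n) :
    ∑ u ∈ univ.erase v, conflictWeight w (classAlloc S c i) u v < 1 := by
  by_cases hv : c v = i
  · convert h v (by simpa using hv) using 1
    rw [← filter_erase, sum_filter]
    simp only [conflictWeight_classAlloc, hv, and_true]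
  · simp [conflictWeight_classAlloc, hv]

variable {w} in
theorem wFeasibleAlloc_of_sum_conflictWeight_lt (hw : ∀ u v, 0 ≤ w u v) (hw0 : ∀ v, w v v = 0)
    {T : Fin n → Finset (Fin k)}
    (hT : ∀ v, ∑ u ∈ univ.erase v, conflictWeight w T u v < 1) : WFeasibleAlloc w T := by
  intro j v hv
  set M := univ.filter fun u => j ∈ T u
  have hjv : j ∈ T v := (mem_filter.mp hv).2
  have h_pointwise : ∀ u ∈ M.erase v, w u v ≤ conflictWeight w T u v := by
    intro u hu
    have hju : j ∈ T u := (mem_filter.mp (mem_of_mem_erase hu)).2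
    rw [conflictWeight, if_pos ⟨j, mem_inter.mpr ⟨hju, hjv⟩⟩, wbar]
    linarith [hw v u]
  calc ∑ u ∈ M, w u v
        = ∑ u ∈ M.erase v, w u v := (sum_erase M (f := (w · v)) (hw0 v)).symm
    _ ≤ ∑ u ∈ M.erase v, conflictWeight w T u v := sum_le_sum h_pointwise
    _ ≤ ∑ u ∈ univ.erase v, conflictWeight w T u v :=
        sum_le_sum_of_subset_of_nonneg (erase_subset_erase v (subset_univ M))
          fun u _ _ => conflictWeight_nonneg T hw u v
    _ < 1 := hT v

end ClassAlloc

theorem partly_feasible_decomposition_general {n k : ℕ} (hn : 2 ≤ n)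
    (w : Fin n → Fin n → ℝ) (hw : ∀ u v, 0 ≤ w u v) (hw0 : ∀ v, w v v = 0)
    (π : Equiv.Perm (Fin n))
    (b : Fin n → Finset (Fin k) → ℝ)
    (hb0 : ∀ v, b v ∅ = 0)
    (S : Fin n → Finset (Fin k)) (hS : PartlyFeasible w π S) :
    ∃ (m : ℕ) (Sf : Fin m → Fin n → Finset (Fin k)),
      m ≤ Nat.clog 2 n ∧
      (∀ (i : Fin m) (v : Fin n),
        ∑ u ∈ univ.filter (fun u => u ≠ v ∧ (Sf i u ∩ Sf i v).Nonempty),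
            wbar w u v < 1) ∧
      (∀ i : Fin m, WFeasibleAlloc w (Sf i)) ∧
      (∀ (i : Fin m) (v : Fin n), Sf i v = S v ∨ Sf i v = ∅) ∧
      (∀ v : Fin n, S v ≠ ∅ → ∃! i : Fin m, Sf i v = S v) ∧
      (∃ i : Fin m,
        (∑ v : Fin n, b v (S v)) / (Nat.clog 2 n : ℝ)
          ≤ ∑ v : Fin n, b v (Sf i v)) := by
  set m := Nat.clog 2 n
  have hm : 0 < m := Nat.clog_pos one_lt_two hn
  have hcard : #(univ : Finset (Fin n)) + 1 < 2 ^ (m + 1) := by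
    have : n ≤ 2 ^ m := Nat.le_pow_clog one_lt_two n
    have : 1 < 2 ^ m := Nat.one_lt_two_pow hm.ne'
    rw [card_univ, Fintype.card_fin, pow_succ]
    omega
  obtain ⟨c, hc_lt, hc_low⟩ := exists_coloring_of_halving (IsLowConflict w S)
    (by simp [IsLowConflict]) (hS.exists_isLowConflict_halving hw) m univ hcard
  let cls : Fin n → Fin m := fun v => ⟨c v, hc_lt v (mem_univ v)⟩
  have h_sum (i : Fin m) (v : Fin n) :
      ∑ u ∈ univ.erase v, conflictWeight w (classAlloc S cls i) u v < 1 := by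
    refine IsLowConflict.sum_conflictWeight_classAlloc_lt (c := cls) ?_ v
    convert hc_low i i.2 using 2
    simp [cls, Fin.ext_iff]
  refine ⟨m, classAlloc S cls, le_rfl, fun i v => ?_,
    fun i => wFeasibleAlloc_of_sum_conflictWeight_lt hw hw0 (h_sum i),
    classAlloc_eq_or_eq_empty S cls, fun v => existsUnique_classAlloc_eq S cls, ?_⟩
  · rw [sum_filter_conflicting_eq_sum_conflictWeight, filter_ne']
    exact h_sum i v
  · have : Nonempty (Fin m) := ⟨⟨0, hm⟩⟩
    rw [← sum_sum_classAlloc S cls b hb0]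
    obtain ⟨i, -, hi⟩ := exists_le_of_le_expect univ_nonempty
      (Fintype.expect_eq_sum_div_card fun i => ∑ v, b v (classAlloc S cls i v)).ge
    exact ⟨i, by simpa using hi⟩

/-- a partly feasible allocation can be decomposed into at most
`⌈log₂ n⌉` feasible allocations, one of which has value at least
`b(S) / ⌈log₂ n⌉`. (`Nat.clog 2 n = ⌈log₂ n⌉`.) -/
theorem partly_feasible_decomposition {n k : ℕ} (hn : 2 ≤ n) (hk : 1 ≤ k)
    (w : Fin n → Fin n → ℝ) (hw : ∀ u v, 0 ≤ w u v) (hw0 : ∀ v, w v v = 0)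
    (π : Equiv.Perm (Fin n))
    (b : Fin n → Finset (Fin k) → ℝ) (hb : ∀ v T, 0 ≤ b v T)
    (hb0 : ∀ v, b v ∅ = 0)
    (S : Fin n → Finset (Fin k)) (hS : PartlyFeasible w π S) :
    ∃ (m : ℕ) (Sf : Fin m → Fin n → Finset (Fin k)),
      m ≤ Nat.clog 2 n ∧
      (∀ (i : Fin m) (v : Fin n),
        ∑ u ∈ univ.filter (fun u => u ≠ v ∧ (Sf i u ∩ Sf i v).Nonempty),
            wbar w u v < 1) ∧
      (∀ i : Fin m, WFeasibleAlloc w (Sf i)) ∧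
      (∀ (i : Fin m) (v : Fin n), Sf i v = S v ∨ Sf i v = ∅) ∧
      (∀ v : Fin n, S v ≠ ∅ → ∃! i : Fin m, Sf i v = S v) ∧
      (∃ i : Fin m,
        (∑ v : Fin n, b v (S v)) / (Nat.clog 2 n : ℝ)
          ≤ ∑ v : Fin n, b v (Sf i v)) :=
  partly_feasible_decomposition_general hn w hw hw0 π b hb0 S hS
end
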